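/- arXiv:2404.04116 — 5 statements merged into one kernel-verified Lean document; each statement's English description precedes it below -/
import Mathlib

section
/- Let φ = (1+√5)/2 be the golden ratio and φ' = (1-√5)/2 its conjugate. If m, n are integers with -1 ≤ m + nφ' ≤ φ - 1, then setting m' = n and n' = m + n (so that φ(m + nφ) = m' + n'φ), we have -1 ≤ m' + n'φ' ≤ φ - 1. In other words, the set Λ = {m + nφ : m, n ∈ ℤ, -1 ≤ m + nφ' ≤ φ - 1} satisfies φΛ ⊆ Λ. -/
/-! Since `φ` and `ψ` are both roots of `x² = x + 1`, the same identity
`x (m + n x) = n + (m + n) x` gives `φ (m + nφ) = n + (m + n)φ` and shows that the conjugate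
coordinate `n + (m + n)ψ` equals `ψ (m + nψ)`. As `φ - 1 = -ψ`, the window is `[-1, -ψ]`, and
multiplication by any `c ∈ [-1, 0]` maps `[-1, -c]` into itself. -/

noncomputable def goldenφ : ℝ := (1 + Real.sqrt 5) / 2
noncomputable def goldenφ' : ℝ := (1 - Real.sqrt 5) / 2

noncomputable def goldenΛ : Set ℝ :=
  {x | ∃ m n : ℤ, x = m + n * goldenφ ∧
    -1 ≤ (m : ℝ) + n * goldenφ' ∧ (m : ℝ) + n * goldenφ' ≤ goldenφ - 1}

open Set Real goldenRatio

lemma mul_add_mul_of_sq_eq_add_one {R : Type*} [CommRing R] {x : R} (hx : x ^ 2 = x + 1)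
    (m n : R) : x * (m + n * x) = n + (m + n) * x := by
  linear_combination n * hx

lemma mul_mem_Icc_neg_one_neg {α : Type*} [CommRing α] [LinearOrder α] [IsStrictOrderedRing α]
    {c t : α} (hc : c ∈ Icc (-1) 0) (ht : t ∈ Icc (-1) (-c)) : c * t ∈ Icc (-1) (-c) := by
  obtain ⟨hc₁, hc₀⟩ := hc
  obtain ⟨ht₁, ht₂⟩ := ht
  constructor
  · nlinarith [mul_nonneg (neg_nonneg.2 hc₀) (sub_nonneg.2 ht₂),
      mul_nonneg (neg_nonneg.2 hc₀) (sub_nonneg.2 hc₁)]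
  · nlinarith [mul_nonneg (neg_nonneg.2 hc₀) (sub_nonneg.2 ht₁)]

lemma goldenφ_eq_goldenRatio : goldenφ = φ := rfl

lemma goldenφ'_eq_goldenConj : goldenφ' = ψ := rfl

lemma goldenConj_mul_mem_window {t : ℝ} (ht : t ∈ Icc (-1) (φ - 1)) :
    ψ * t ∈ Icc (-1) (φ - 1) := by
  rw [← neg_sub, one_sub_goldenConj] at ht ⊢
  exact mul_mem_Icc_neg_one_neg ⟨neg_one_lt_goldenConj.le, goldenConj_neg.le⟩ ht

lemma goldenφ_mul_of_conj_mem_window (m n : ℤ) (h₁ : -1 ≤ (m : ℝ) + n * goldenφ')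
    (h₂ : (m : ℝ) + n * goldenφ' ≤ goldenφ - 1) :
    goldenφ * ((m : ℝ) + n * goldenφ) = ((n : ℤ) : ℝ) + ((m + n : ℤ) : ℝ) * goldenφ ∧
      -1 ≤ ((n : ℤ) : ℝ) + ((m + n : ℤ) : ℝ) * goldenφ' ∧
      ((n : ℤ) : ℝ) + ((m + n : ℤ) : ℝ) * goldenφ' ≤ goldenφ - 1 := by
  rw [goldenφ_eq_goldenRatio, goldenφ'_eq_goldenConj] at *
  push_cast
  rw [← mul_add_mul_of_sq_eq_add_one goldenConj_sq]
  exact ⟨mul_add_mul_of_sq_eq_add_one goldenRatio_sq _ _, goldenConj_mul_mem_window ⟨h₁, h₂⟩⟩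

theorem stmt0 :
    (∀ m n : ℤ, -1 ≤ (m : ℝ) + n * goldenφ' → (m : ℝ) + n * goldenφ' ≤ goldenφ - 1 →
      goldenφ * ((m : ℝ) + n * goldenφ) = ((n : ℤ) : ℝ) + ((m + n : ℤ) : ℝ) * goldenφ ∧
      -1 ≤ ((n : ℤ) : ℝ) + ((m + n : ℤ) : ℝ) * goldenφ' ∧
      ((n : ℤ) : ℝ) + ((m + n : ℤ) : ℝ) * goldenφ' ≤ goldenφ - 1) ∧
    (goldenφ * ·) '' goldenΛ ⊆ goldenΛ := by
  refine ⟨goldenφ_mul_of_conj_mem_window, ?_⟩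
  rintro _ ⟨_, ⟨m, n, rfl, h₁, h₂⟩, rfl⟩
  exact ⟨n, m + n, goldenφ_mul_of_conj_mem_window m n h₁ h₂⟩
end

section
/- The set Λ = {m + nφ : m, n ∈ ℤ, -1 ≤ m + nφ' ≤ φ - 1} is relatively dense in ℝ: there exists R > 0 such that every closed interval of length 2R contains at least one point of Λ. -/
open Set

lemma goldenφ_sub_goldenφ' : goldenφ - goldenφ' = √5 := by
  unfold goldenφ goldenφ'
  ring

lemma one_le_goldenφ : 1 ≤ goldenφ := by
  have : 1 ≤ √5 := Real.one_le_sqrt.mpr (by norm_num)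
  unfold goldenφ
  linarith

lemma exists_mem_goldenΛ_mem_Ico (n : ℤ) : ∃ y ∈ goldenΛ, y ∈ Ico (n * √5 - 1) (n * √5) := by
  obtain ⟨m, hm_lo, hm_hi⟩ :=
    (existsUnique_add_zsmul_mem_Ico one_pos ((n : ℝ) * goldenφ') (-1)).exists
  rw [zsmul_one] at hm_lo hm_hi
  have h_split : (m : ℝ) + n * goldenφ = ((m : ℝ) + n * goldenφ') + n * √5 := by
    rw [← goldenφ_sub_goldenφ']
    ring
  refine ⟨m + n * goldenφ, ⟨m, n, rfl, by linarith, ?_⟩, ?_, ?_⟩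
  · linarith [one_le_goldenφ]
  · rw [h_split]; linarith
  · rw [h_split]; linarith

theorem stmt2 :
    ∃ R > 0, ∀ x : ℝ, ∃ y ∈ goldenΛ, y ∈ Set.Icc x (x + 2 * R) := by
  have h_sqrt5 : √5 < 3 := by
    rw [Real.sqrt_lt' (by norm_num)]
    norm_num
  refine ⟨2, two_pos, fun x => ?_⟩
  obtain ⟨n, hn_lo, hn_hi⟩ :=
    (existsUnique_add_zsmul_mem_Ico (Real.sqrt_pos.mpr (by norm_num : (0 : ℝ) < 5)) 0 (x + 1)).exists
  rw [zero_add, zsmul_eq_mul] at hn_lo hn_hi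
  obtain ⟨y, hy, hy_lo, hy_hi⟩ := exists_mem_goldenΛ_mem_Ico n
  exact ⟨y, hy, by linarith, by linarith⟩
end

section
/- Let Λ ⊆ ℝⁿ be a Delone set. Then Λ is a Meyer set (i.e., Λ - Λ ⊆ Λ + F for some finite set F) if and only if Λ - Λ is also a Delone set. -/
open Pointwise Metric

section ChainHelpers


variable {G : Type*} [AddCommGroup G] [DecidableEq G]

def iterSum (T : Finset G) : ℕ → Finset G
  | 0 => {0}
  | m+1 => iterSum T m ∪ (iterSum T m + T)

lemma iterSum_mono (T : Finset G) {m m' : ℕ} (h : m ≤ m') : iterSum T m ⊆ iterSum T m' := by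
  induction m' with
  | zero => simp_all
  | succ k ih =>
    rcases Nat.lt_or_ge m (k+1) with h'|h'
    · exact (ih (by omega)).trans (Finset.subset_union_left)
    · have : m = k + 1 := by omega
      subst this; rfl

lemma tele (T : Finset G) (δ : ℕ → G) : ∀ m, (∀ i < m, δ (i+1) - δ i ∈ T) →
    δ m - δ 0 ∈ iterSum T m := by
  intro m
  induction m with
  | zero => intro _; simp [iterSum]
  | succ k ih =>
    intro h
    have h1 := ih (fun i hi => h i (by omega))
    have h2 := h k (by omega)
    have : δ (k+1) - δ 0 = (δ k - δ 0) + (δ (k+1) - δ k) := by abel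
    rw [this]
    exact Finset.mem_union_right _ (Finset.add_mem_add h1 h2)

lemma chain_lemma (T : Finset G) (K : ℕ) (V : Set G) (hfin : V.Finite) (hcard : V.ncard ≤ K) :
    ∀ N : ℕ, ∀ δ : ℕ → G, (∀ i < N, δ (i+1) - δ i ∈ T) → (∀ i ≤ N, δ i ∈ V) →
      δ N - δ 0 ∈ iterSum T K := by
  intro N
  induction N using Nat.strong_induction_on with
  | _ N ih =>
    intro δ hstep hmem
    by_cases hdup : ∃ i, ∃ j, i < j ∧ j ≤ N ∧ δ i = δ j
    · obtain ⟨i, j, hij, hjN, heq⟩ := hdup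
      set N' := N - (j - i) with hN'def
      have hN' : N' < N := by omega
      set δ' : ℕ → G := fun k => if k ≤ i then δ k else δ (k + (j - i)) with hδ'def
      have hshift : ∀ k, i ≤ k → δ' k = δ (k + (j - i)) := by
        intro k hk
        by_cases h : k ≤ i
        · have : k = i := le_antisymm h hk
          subst this
          simp only [hδ'def, le_refl, if_pos]
          rw [heq]; congr 1; omega
        · simp only [hδ'def, if_neg h]
      have hstep' : ∀ k < N', δ' (k+1) - δ' k ∈ T := by
        intro k hk
        by_cases h : k + 1 ≤ i
        · have e1 : δ' (k+1) = δ (k+1) := by simp [hδ'def, h]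
          have e2 : δ' k = δ k := by simp [hδ'def, (show k ≤ i by omega)]
          rw [e1, e2]
          exact hstep k (by omega)
        · have e1 : δ' (k+1) = δ (k + 1 + (j - i)) := hshift (k+1) (by omega)
          have e2 : δ' k = δ (k + (j - i)) := hshift k (by omega)
          rw [e1, e2]
          have : k + 1 + (j - i) = (k + (j - i)) + 1 := by omega
          rw [this]
          exact hstep (k + (j - i)) (by omega)
      have hmem' : ∀ k ≤ N', δ' k ∈ V := by
        intro k hk
        by_cases h : k ≤ i
        · simpa [hδ'def, h] using hmem k (by omega)
        · rw [hshift k (by omega)]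
          exact hmem _ (by omega)
      have h0 : δ' 0 = δ 0 := by simp [hδ'def]
      have hN : δ' N' = δ N := by
        rw [hshift N' (by omega)]
        congr 1; omega
      have := ih N' hN' δ' hstep' hmem'
      rwa [h0, hN] at this
    · push_neg at hdup
      have hinj : Set.InjOn δ ↑(Finset.range (N+1)) := by
        intro a ha b hb hab
        simp only [Finset.coe_range, Set.mem_Iio] at ha hb
        by_contra hne
        rcases Nat.lt_or_ge a b with h|h
        · exact hdup a b h (by omega) hab
        · exact hdup b a (by omega) (by omega) hab.symm
      have hcard2 : N + 1 ≤ K := by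
        have h1 : (Finset.image δ (Finset.range (N+1))).card = N + 1 := by
          rw [Finset.card_image_of_injOn hinj, Finset.card_range]
        have h2 : Finset.image δ (Finset.range (N+1)) ⊆ hfin.toFinset := by
          intro v hv
          simp only [Finset.mem_image, Finset.mem_range] at hv
          obtain ⟨a, ha, rfl⟩ := hv
          rw [Set.Finite.mem_toFinset]
          exact hmem a (by omega)
        have h3 := Finset.card_le_card h2
        rw [h1] at h3
        have h4 : V.ncard = hfin.toFinset.card := Set.ncard_eq_toFinset_card V hfin
        omega
      exact iterSum_mono T (by omega) (tele T δ N hstep)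

end ChainHelpers

section SepHelpers


variable {X : Type*} [NormedAddCommGroup X] [ProperSpace X]

lemma sep_card_bound (r ρ : ℝ) (hr : 0 < r) :
    ∃ K : ℕ, ∀ (c : X) (S : Set X), (∀ x ∈ S, ∀ y ∈ S, x ≠ y → r ≤ dist x y) →
      S ⊆ closedBall c ρ → S.Finite ∧ S.ncard ≤ K := by
  have hcomp : IsCompact (closedBall (0:X) ρ) := isCompact_closedBall 0 ρ
  have htb := hcomp.totallyBounded
  rw [Metric.totallyBounded_iff] at htb
  obtain ⟨t, htfin, htcov⟩ := htb (r/2) (by linarith)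
  refine ⟨t.ncard, ?_⟩
  intro c S hsep hsub
  have hchoice : ∀ s : X, s ∈ S → ∃ p ∈ t, s - c ∈ ball p (r/2) := by
    intro s hs
    have h1 : s - c ∈ closedBall (0:X) ρ := by
      rw [mem_closedBall, dist_zero_right]
      have := hsub hs
      rw [mem_closedBall, dist_eq_norm] at this
      exact this
    simpa using htcov h1
  choose! f hf1 hf2 using hchoice
  have hinj : Set.InjOn f S := by
    intro a ha b hb hab
    have h1 := hf2 a ha
    have h2 := hf2 b hb
    rw [hab] at h1
    by_contra hne
    have hd : dist a b < r := by
      have h3 : dist (a - c) (b - c) < r := by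
        calc dist (a - c) (b - c) ≤ dist (a - c) (f b) + dist (f b) (b - c) := dist_triangle _ _ _
        _ < r/2 + r/2 := by
            rw [mem_ball] at h1 h2
            rw [dist_comm (f b) (b - c)]
            linarith
        _ = r := by ring
      simpa [dist_sub_right] using h3
    exact absurd (hsep a ha b hb hne) (by linarith)
  have himg : f '' S ⊆ t := by
    rintro _ ⟨s, hs, rfl⟩
    exact hf1 s hs
  have hSfin : S.Finite := Set.Finite.of_finite_image (htfin.subset himg) hinj
  refine ⟨hSfin, ?_⟩
  calc S.ncard = (f '' S).ncard := (Set.ncard_image_of_injOn hinj).symm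
  _ ≤ t.ncard := Set.ncard_le_ncard himg htfin

end SepHelpers

def UniformlyDiscrete {n : ℕ} (Λ : Set (EuclideanSpace ℝ (Fin n))) : Prop :=
  ∃ r > 0, ∀ x ∈ Λ, ∀ y ∈ Λ, x ≠ y → r ≤ dist x y

def RelativelyDense {n : ℕ} (Λ : Set (EuclideanSpace ℝ (Fin n))) : Prop :=
  ∃ R > 0, ∀ x : EuclideanSpace ℝ (Fin n), ∃ y ∈ Λ, dist x y ≤ R

def IsDelone {n : ℕ} (Λ : Set (EuclideanSpace ℝ (Fin n))) : Prop :=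
  UniformlyDiscrete Λ ∧ RelativelyDense Λ

section Geom


variable {n : ℕ}

local notation "E" => EuclideanSpace ℝ (Fin n)

lemma line_chain (Λ : Set E) (R : ℝ) (hRnn : 0 ≤ R)
    (hdense : ∀ p : E, ∃ y ∈ Λ, dist p y ≤ R)
    (a b : E) (ha : a ∈ Λ) (hb : b ∈ Λ) (N : ℕ) (hN : 1 ≤ N) :
    ∃ z : ℕ → E, (∀ i, z i ∈ Λ) ∧
      (∀ i, dist (z i) (a + (((min i N : ℕ) : ℝ)/(N:ℝ)) • (b - a)) ≤ R) ∧
      z 0 = a ∧ z N = b := by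
  choose f hf1 hf2 using hdense
  refine ⟨fun i => if i = 0 then a else if N ≤ i then b else
    f (a + (((min i N : ℕ) : ℝ)/(N:ℝ)) • (b - a)), ?_, ?_, ?_, ?_⟩
  · intro i
    by_cases h0 : i = 0
    · simp [h0, ha]
    · by_cases hNi : N ≤ i
      · simp [h0, hNi, hb]
      · simp only [h0, hNi, if_false, if_neg]
        exact hf1 _
  · intro i
    by_cases h0 : i = 0
    · subst h0
      simpa using hRnn
    · by_cases hNi : N ≤ i
      · have hmin : min i N = N := min_eq_right hNi
        have hcoef : ((min i N : ℕ) : ℝ)/(N:ℝ) = 1 := by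
          rw [hmin]
          field_simp
        simp only [h0, hNi, if_false, if_true, if_neg, if_pos, hcoef, one_smul]
        have : a + (b - a) = b := by abel
        rw [this]
        simpa using hRnn
      · simp only [h0, hNi, if_false, if_neg]
        rw [dist_comm]
        exact hf2 _
  · simp
  · have h0 : (N:ℕ) ≠ 0 := by omega
    simp [h0, le_refl]

lemma key_lemma (Λ : Set E) (r R : ℝ) (hr : 0 < r) (hR : 0 < R)
    (hsep : ∀ x ∈ Λ - Λ, ∀ y ∈ Λ - Λ, x ≠ y → r ≤ dist x y)
    (hdense : ∀ p : E, ∃ y ∈ Λ, dist p y ≤ R) (ρ : ℝ) (hρ : 0 ≤ ρ) :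
    ∃ P : Finset E, ∀ x ∈ Λ, ∀ y ∈ Λ, ∀ x' ∈ Λ, ∀ y' ∈ Λ,
      ‖(x' - y') - (x - y)‖ ≤ ρ → (x' - y') - (x - y) ∈ P := by
  classical
  obtain ⟨K, hK⟩ := sep_card_bound (X := E) r (2*R + ρ) hr
  obtain ⟨K2, hK2⟩ := sep_card_bound (X := E) r (3*R + ρ) hr
  set D₀ : Set E := (Λ - Λ) ∩ closedBall 0 (3*R + ρ) with hD₀def
  have hD₀fin : D₀.Finite :=
    (hK2 0 D₀ (fun a ha b hb hab => hsep a ha.1 b hb.1 hab) (fun a ha => ha.2)).1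
  set T₀ : Finset E := hD₀fin.toFinset - hD₀fin.toFinset with hT₀def
  refine ⟨iterSum T₀ K, ?_⟩
  intro x hx y hy x' hx' y' hy' hv
  set v : E := (x' - y') - (x - y) with hvdef
  set N : ℕ := ⌈‖x - y‖ / R⌉₊ + 1 with hNdef
  have hN1 : 1 ≤ N := by omega
  have hNpos : (0:ℝ) < N := by positivity
  have hNR : ‖x - y‖ ≤ N * R := by
    have h1 : ‖x - y‖ / R ≤ (⌈‖x - y‖ / R⌉₊ : ℝ) := Nat.le_ceil _
    have h2 : ((⌈‖x - y‖ / R⌉₊ : ℕ) : ℝ) ≤ (N : ℝ) := by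
      rw [hNdef]; push_cast; linarith
    have := h1.trans h2
    rw [div_le_iff₀ hR] at this
    linarith [this]
  have hNR' : ‖x' - y'‖ ≤ N * R + ρ := by
    have : ‖x' - y'‖ ≤ ‖x - y‖ + ‖v‖ := by
      have : x' - y' = (x - y) + v := by rw [hvdef]; abel
      rw [this]
      exact norm_add_le _ _
    linarith
  -- the two chains
  obtain ⟨z, hzΛ, hzd, hz0, hzN⟩ := line_chain Λ R (le_of_lt hR) hdense y x hy hx N hN1
  obtain ⟨z', hz'Λ, hz'd, hz'0, hz'N⟩ := line_chain Λ R (le_of_lt hR) hdense y' x' hy' hx' N hN1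
  set c : ℕ → ℝ := fun i => ((min i N : ℕ) : ℝ)/(N:ℝ) with hcdef
  have hc01 : ∀ i, 0 ≤ c i ∧ c i ≤ 1 := by
    intro i
    constructor
    · positivity
    · rw [hcdef]
      simp only
      rw [div_le_one hNpos]
      exact_mod_cast Nat.cast_le.mpr (min_le_right i N)
  have hcstep : ∀ i, 0 ≤ c (i+1) - c i ∧ c (i+1) - c i ≤ 1/(N:ℝ) := by
    intro i
    have h1 : min i N ≤ min (i+1) N := by omega
    have h2 : min (i+1) N ≤ min i N + 1 := by omega
    have h1' : ((min i N : ℕ) : ℝ) ≤ ((min (i+1) N : ℕ) : ℝ) := by exact_mod_cast h1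
    have h2' : ((min (i+1) N : ℕ) : ℝ) ≤ ((min i N : ℕ) : ℝ) + 1 := by exact_mod_cast h2
    have e : c (i+1) - c i = (((min (i+1) N : ℕ) : ℝ) - ((min i N : ℕ) : ℝ))/(N:ℝ) := by
      rw [hcdef]; ring
    constructor
    · rw [e]; apply div_nonneg (by linarith) (le_of_lt hNpos)
    · rw [e]
      gcongr
      linarith
  set pt : ℕ → E := fun i => y + c i • (x - y) with hptdef
  set qt : ℕ → E := fun i => y' + c i • (x' - y') with hqtdef
  have hptstep : ∀ i, dist (pt (i+1)) (pt i) ≤ R := by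
    intro i
    have e : pt (i+1) - pt i = (c (i+1) - c i) • (x - y) := by
      rw [hptdef]; simp only; rw [sub_smul]; abel
    rw [dist_eq_norm, e, norm_smul, Real.norm_eq_abs,
      abs_of_nonneg (hcstep i).1]
    calc (c (i+1) - c i) * ‖x - y‖ ≤ (1/(N:ℝ)) * ((N:ℝ) * R) := by
          apply mul_le_mul (hcstep i).2 hNR (norm_nonneg _) (by positivity)
    _ = R := by field_simp
  have hqtstep : ∀ i, dist (qt (i+1)) (qt i) ≤ R + ρ := by
    intro i
    have e : qt (i+1) - qt i = (c (i+1) - c i) • (x' - y') := by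
      rw [hqtdef]; simp only; rw [sub_smul]; abel
    rw [dist_eq_norm, e, norm_smul, Real.norm_eq_abs,
      abs_of_nonneg (hcstep i).1]
    calc (c (i+1) - c i) * ‖x' - y'‖ ≤ (1/(N:ℝ)) * ((N:ℝ) * R + ρ) := by
          apply mul_le_mul (hcstep i).2 hNR' (norm_nonneg _) (by positivity)
    _ = R + ρ/(N:ℝ) := by field_simp
    _ ≤ R + ρ := by
          have : ρ/(N:ℝ) ≤ ρ/1 := by
            apply div_le_div_of_nonneg_left hρ one_pos ?_ |>.trans (le_refl _)
            · exact_mod_cast hN1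
          simp at this
          linarith
  set δ : ℕ → E := fun i => z' i - z i with hδdef
  have hδΔ : ∀ i, δ i ∈ Λ - Λ := fun i => Set.sub_mem_sub (hz'Λ i) (hzΛ i)
  have hzD : ∀ i, z (i+1) - z i ∈ D₀ := by
    intro i
    constructor
    · exact Set.sub_mem_sub (hzΛ (i+1)) (hzΛ i)
    · rw [mem_closedBall, dist_zero_right, ← dist_eq_norm]
      calc dist (z (i+1)) (z i) ≤ dist (z (i+1)) (pt (i+1)) + dist (pt (i+1)) (pt i)
            + dist (pt i) (z i) := dist_triangle4 _ _ _ _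
      _ ≤ R + R + R := by
            have a1 := hzd (i+1)
            have a2 := hzd i
            rw [dist_comm (pt i) (z i)]
            exact add_le_add (add_le_add a1 (hptstep i)) a2
      _ ≤ 3*R + ρ := by linarith
  have hz'D : ∀ i, z' (i+1) - z' i ∈ D₀ := by
    intro i
    constructor
    · exact Set.sub_mem_sub (hz'Λ (i+1)) (hz'Λ i)
    · rw [mem_closedBall, dist_zero_right, ← dist_eq_norm]
      calc dist (z' (i+1)) (z' i) ≤ dist (z' (i+1)) (qt (i+1)) + dist (qt (i+1)) (qt i)
            + dist (qt i) (z' i) := dist_triangle4 _ _ _ _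
      _ ≤ R + (R + ρ) + R := by
            have a1 := hz'd (i+1)
            have a2 := hz'd i
            rw [dist_comm (qt i) (z' i)]
            exact add_le_add (add_le_add a1 (hqtstep i)) a2
      _ ≤ 3*R + ρ := by linarith
  have hstepT : ∀ i, δ (i+1) - δ i ∈ T₀ := by
    intro i
    have e : δ (i+1) - δ i = (z' (i+1) - z' i) - (z (i+1) - z i) := by
      simp only [hδdef]; abel
    rw [e, hT₀def]
    exact Finset.sub_mem_sub (hD₀fin.mem_toFinset.2 (hz'D i)) (hD₀fin.mem_toFinset.2 (hzD i))
  set V : Set E := (Λ - Λ) ∩ closedBall (δ 0) (2*R + ρ) with hVdef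
  have hmemV : ∀ i, δ i ∈ V := by
    intro i
    refine ⟨hδΔ i, ?_⟩
    rw [mem_closedBall, dist_eq_norm]
    have esmul : c i • v = c i • (x' - y') - c i • (x - y) := by
      rw [hvdef, smul_sub]
    have e : δ i - δ 0 = (z' i - qt i) - (z i - pt i) + c i • v := by
      simp only [hδdef, hqtdef, hptdef]
      rw [hz0, hz'0, esmul]
      abel
    rw [e]
    have b1 : ‖z' i - qt i‖ ≤ R := by rw [← dist_eq_norm]; exact hz'd i
    have b2 : ‖z i - pt i‖ ≤ R := by rw [← dist_eq_norm]; exact hzd i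
    have b3 : ‖c i • v‖ ≤ ρ := by
      rw [norm_smul, Real.norm_eq_abs, abs_of_nonneg (hc01 i).1]
      calc c i * ‖v‖ ≤ 1 * ρ := mul_le_mul (hc01 i).2 hv (norm_nonneg _) zero_le_one
      _ = ρ := one_mul ρ
    calc ‖(z' i - qt i) - (z i - pt i) + c i • v‖
        ≤ ‖(z' i - qt i) - (z i - pt i)‖ + ‖c i • v‖ := norm_add_le _ _
    _ ≤ (‖z' i - qt i‖ + ‖z i - pt i‖) + ‖c i • v‖ := by
        have := norm_sub_le (z' i - qt i) (z i - pt i)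
        linarith
    _ ≤ R + R + ρ := by linarith
    _ = 2*R + ρ := by ring
  obtain ⟨hVfin, hVcard⟩ := hK (δ 0) V
    (fun a ha b hb hab => hsep a ha.1 b hb.1 hab) (fun a ha => ha.2)
  have hfinal := chain_lemma T₀ K V hVfin hVcard N δ
    (fun i _ => hstepT i) (fun i _ => hmemV i)
  have e : v = δ N - δ 0 := by
    simp only [hδdef]
    rw [hzN, hz'N, hz0, hz'0, hvdef]
    abel
  rw [e]
  exact hfinal

end Geom

theorem stmt3 {n : ℕ} (Λ : Set (EuclideanSpace ℝ (Fin n))) (hΛ : IsDelone Λ) :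
    (∃ F : Finset (EuclideanSpace ℝ (Fin n)), Λ - Λ ⊆ Λ + (F : Set (EuclideanSpace ℝ (Fin n))))
      ↔ IsDelone (Λ - Λ) := by
  classical
  obtain ⟨⟨r0, hr0, hsep0⟩, ⟨R, hR, hdense⟩⟩ := hΛ
  obtain ⟨a, haΛ, -⟩ := hdense 0
  constructor
  · rintro ⟨F, hF⟩
    constructor
    · -- uniform discreteness of Λ - Λ
      set G : Finset (EuclideanSpace ℝ (Fin n)) := F + F - F with hGdef
      set Hset : Set (EuclideanSpace ℝ (Fin n)) :=
        {s | ‖s‖ ≤ 1 ∧ ∃ μ ∈ Λ, ∃ g ∈ G, μ + g = s} with hHdef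
      obtain ⟨K0, hK0⟩ := sep_card_bound (X := EuclideanSpace ℝ (Fin n)) r0 1 hr0
      have hHfin : Hset.Finite := by
        have hsub : Hset ⊆ ⋃ g ∈ (G : Set (EuclideanSpace ℝ (Fin n))),
            (fun μ => μ + g) '' (Λ ∩ closedBall (-g) 1) := by
          rintro s ⟨hnorm, μ, hμ, g, hg, rfl⟩
          refine Set.mem_biUnion (Finset.mem_coe.2 hg) ⟨μ, ⟨hμ, ?_⟩, rfl⟩
          rw [mem_closedBall, dist_eq_norm]
          simpa [sub_neg_eq_add] using hnorm
        refine Set.Finite.subset (Set.Finite.biUnion G.finite_toSet ?_) hsub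
        intro g _
        apply Set.Finite.image
        exact (hK0 (-g) (Λ ∩ closedBall (-g) 1)
          (fun u hu w hw huw => hsep0 u hu.1 w hw.1 huw) (fun u hu => hu.2)).1
      obtain ⟨ε, hε, hεb⟩ : ∃ ε > 0, ∀ s ∈ Hset, s ≠ 0 → ε ≤ ‖s‖ := by
        have hH'fin : (Hset \ {0}).Finite := hHfin.subset Set.diff_subset
        set T : Finset ℝ := hH'fin.toFinset.image (fun v => ‖v‖) with hTdef
        by_cases hne : T.Nonempty
        · refine ⟨T.min' hne, ?_, ?_⟩
          · obtain ⟨v, hv, hveq⟩ := Finset.mem_image.1 (T.min'_mem hne)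
            rw [← hveq]
            rw [Set.Finite.mem_toFinset] at hv
            exact norm_pos_iff.2 (by simpa using hv.2)
          · intro s hs hs0
            apply T.min'_le
            rw [hTdef]
            apply Finset.mem_image_of_mem
            rw [Set.Finite.mem_toFinset]
            exact ⟨hs, by simpa using hs0⟩
        · refine ⟨1, one_pos, ?_⟩
          intro s hs hs0
          exfalso
          apply hne
          refine ⟨‖s‖, ?_⟩
          rw [hTdef]
          apply Finset.mem_image_of_mem
          rw [Set.Finite.mem_toFinset]
          exact ⟨hs, by simpa using hs0⟩
      refine ⟨min 1 ε, lt_min one_pos hε, ?_⟩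
      intro d hd d' hd' hne
      have hs0 : d - d' ≠ 0 := sub_ne_zero_of_ne hne
      rw [dist_eq_norm]
      rcases le_or_gt ‖d - d'‖ 1 with hle | hlt
      · -- show d - d' ∈ Hset
        have hmem : d - d' ∈ Hset := by
          obtain ⟨l1, hl1, f1, hf1, hsum1⟩ := Set.mem_add.1 (hF hd)
          obtain ⟨l2, hl2, f2, hf2, hsum2⟩ := Set.mem_add.1 (hF hd')
          obtain ⟨μ, hμ, f3, hf3, hsum3⟩ := Set.mem_add.1 (hF (Set.sub_mem_sub hl1 hl2))
          refine ⟨hle, μ, hμ, f3 + f1 - f2, ?_, ?_⟩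
          · exact Finset.sub_mem_sub (Finset.add_mem_add (Finset.mem_coe.1 hf3)
              (Finset.mem_coe.1 hf1)) (Finset.mem_coe.1 hf2)
          · rw [← hsum1, ← hsum2]
            have : μ + f3 = l1 - l2 := hsum3
            rw [show μ + (f3 + f1 - f2) = (μ + f3) + f1 - f2 by abel, this]
            abel
        exact le_trans (min_le_right 1 ε) (hεb _ hmem hs0)
      · exact le_trans (min_le_left 1 ε) (le_of_lt hlt)
    · -- relative density of Λ - Λ
      refine ⟨R, hR, ?_⟩
      intro p
      obtain ⟨w, hw, hwd⟩ := hdense (p + a)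
      refine ⟨w - a, Set.sub_mem_sub hw haΛ, ?_⟩
      rw [dist_eq_norm] at hwd ⊢
      have : p - (w - a) = (p + a) - w := by abel
      rw [this]
      exact hwd
  · rintro ⟨⟨r, hr, hsep⟩, -⟩
    obtain ⟨P, hP⟩ := key_lemma Λ r R hr hR hsep hdense (R + ‖a‖) (by positivity)
    refine ⟨P.image (fun u => u - a), ?_⟩
    intro d hd
    obtain ⟨p, hp, q, hq, rfl⟩ := Set.mem_sub.1 hd
    obtain ⟨lam, hlam, hdist⟩ := hdense (p - q)
    have hbound : ‖(p - q) - (lam - a)‖ ≤ R + ‖a‖ := by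
      have e : (p - q) - (lam - a) = ((p - q) - lam) + a := by abel
      rw [e]
      calc ‖((p - q) - lam) + a‖ ≤ ‖(p - q) - lam‖ + ‖a‖ := norm_add_le _ _
      _ ≤ R + ‖a‖ := by
          rw [← dist_eq_norm]
          exact add_le_add_left hdist _
    have hkey := hP lam hlam a haΛ p hp q hq hbound
    rw [Set.mem_add]
    refine ⟨lam, hlam, ((p - q) - (lam - a)) - a, ?_, by abel⟩
    rw [Finset.coe_image]
    exact ⟨(p - q) - (lam - a), hkey, rfl⟩
end

section
/- (Garsia-type uniform discreteness) Let β be a Pisot number of degree d ≥ 2 and let F ⊆ ℤ be a finite set of integers. Then the set Λ_F = {P(β) : P a polynomial with coefficients in F} is uniformly discrete: there is a constant c > 0 such that any two distinct elements of Λ_F differ by at least c. -/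
open IntermediateField Polynomial Finset

/-- Geometric-series bound for evaluating an integer polynomial with bounded
coefficients at a complex number of absolute value `< 1`. -/
lemma stmt5_geom_bound (z : ℂ) (hz : ‖z‖ < 1) (M : ℝ) (hM : 0 ≤ M)
    (Q : Polynomial ℤ) (hQ : ∀ i, |((Q.coeff i : ℤ) : ℝ)| ≤ M) :
    ‖Polynomial.aeval z Q‖ ≤ M / (1 - ‖z‖) := by
  set r := ‖z‖ with hr
  have hr0 : 0 ≤ r := norm_nonneg z
  have hr1 : r < 1 := hz
  have hsum : ∀ n : ℕ, ∑ i ∈ range n, r ^ i ≤ (1 - r)⁻¹ := by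
    intro n
    have hs : Summable (fun i : ℕ => r ^ i) := summable_geometric_of_lt_one hr0 hr1
    calc ∑ i ∈ range n, r ^ i ≤ ∑' i : ℕ, r ^ i :=
          Summable.sum_le_tsum _ (fun i _ => pow_nonneg hr0 i) hs
      _ = (1 - r)⁻¹ := tsum_geometric_of_lt_one hr0 hr1
  have expand : Polynomial.aeval z Q
      = ∑ i ∈ range (Q.natDegree + 1), (Q.coeff i : ℂ) * z ^ i := by
    rw [Polynomial.aeval_eq_sum_range]
    simp [zsmul_eq_mul]
  rw [expand, div_eq_mul_inv]
  calc ‖∑ i ∈ range (Q.natDegree + 1), (Q.coeff i : ℂ) * z ^ i‖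
      ≤ ∑ i ∈ range (Q.natDegree + 1), ‖(Q.coeff i : ℂ) * z ^ i‖ :=
        norm_sum_le _ _
    _ ≤ ∑ i ∈ range (Q.natDegree + 1), M * r ^ i := by
        refine Finset.sum_le_sum fun i _ => ?_
        rw [norm_mul, norm_pow]
        have h1 : ‖(Q.coeff i : ℂ)‖ = |((Q.coeff i : ℤ) : ℝ)| := by
          rw [show ((Q.coeff i : ℤ) : ℂ) = (((Q.coeff i : ℤ) : ℝ) : ℂ) by push_cast; ring]
          rw [Complex.norm_real, Real.norm_eq_abs]
        rw [h1]
        exact mul_le_mul (hQ i) le_rfl (pow_nonneg hr0 i) hM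
    _ = M * ∑ i ∈ range (Q.natDegree + 1), r ^ i := by rw [Finset.mul_sum]
    _ ≤ M * (1 - r)⁻¹ := by
        exact mul_le_mul_of_nonneg_left (hsum _) hM

set_option maxHeartbeats 1000000 in
set_option synthInstance.maxHeartbeats 200000 in
theorem stmt5 (β : ℝ) (hβ : 1 < β) (hint : IsIntegral ℤ β)
    (hdeg : 2 ≤ (minpoly ℤ β).natDegree)
    (hconj : ∀ z : ℂ, Polynomial.aeval z (minpoly ℤ β) = 0 → z ≠ (β : ℂ) →
      ‖z‖ < 1)
    (F : Finset ℤ) :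
    ∃ c > 0, ∀ x ∈ {x : ℝ | ∃ P : Polynomial ℤ,
        (∀ i ∈ P.support, P.coeff i ∈ F) ∧ x = Polynomial.aeval β P},
      ∀ y ∈ {x : ℝ | ∃ P : Polynomial ℤ,
        (∀ i ∈ P.support, P.coeff i ∈ F) ∧ x = Polynomial.aeval β P},
      x ≠ y → c ≤ |x - y| := by
  classical
  have hQint : IsIntegral ℚ β := hint.tower_top
  set K := ℚ⟮β⟯ with hK
  haveI : FiniteDimensional ℚ K := IntermediateField.adjoin.finiteDimensional hQint
  set b : K := IntermediateField.AdjoinSimple.gen ℚ β with hb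
  have hbβ : (algebraMap K ℝ) b = β := rfl
  have hinj : Function.Injective (algebraMap K ℝ) := (algebraMap K ℝ).injective
  -- b is a root of the minimal polynomial of β over ℤ
  have hbmin : Polynomial.aeval b (minpoly ℤ β) = 0 := by
    apply hinj
    rw [map_zero]
    have h : Polynomial.aeval β (minpoly ℤ β)
        = (algebraMap K ℝ) (Polynomial.aeval b (minpoly ℤ β)) :=
      Polynomial.aeval_algHom_apply ((algebraMap K ℝ).toIntAlgHom) b (minpoly ℤ β)
    rw [← h]
    exact minpoly.aeval ℤ β
  have hbint : IsIntegral ℤ b := ⟨minpoly ℤ β, minpoly.monic hint, hbmin⟩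
  -- each embedding sends b to a root of the minimal polynomial
  have hroot : ∀ σ : K →ₐ[ℚ] ℂ, Polynomial.aeval (σ b) (minpoly ℤ β) = 0 := by
    intro σ
    have h : Polynomial.aeval (σ b) (minpoly ℤ β)
        = σ.toRingHom.toIntAlgHom (Polynomial.aeval b (minpoly ℤ β)) :=
      Polynomial.aeval_algHom_apply (σ.toRingHom.toIntAlgHom) b (minpoly ℤ β)
    rw [h, hbmin, map_zero]
  -- the coefficient bound
  set M : ℝ := 2 * (F.sup (fun a => a.natAbs) : ℕ) with hM
  have hM0 : 0 ≤ M := by positivity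
  have hcoeff : ∀ P : Polynomial ℤ, (∀ i ∈ P.support, P.coeff i ∈ F) →
      ∀ i, |((P.coeff i : ℤ) : ℝ)| ≤ (F.sup (fun a => a.natAbs) : ℕ) := by
    intro P hP i
    by_cases h : i ∈ P.support
    · have : (P.coeff i).natAbs ≤ F.sup (fun a => a.natAbs) :=
        Finset.le_sup (hP i h)
      calc |((P.coeff i : ℤ) : ℝ)| = ((P.coeff i).natAbs : ℝ) := by
            rw [Nat.cast_natAbs, Int.cast_abs]
        _ ≤ _ := by exact_mod_cast this
    · simp [Polynomial.notMem_support_iff.mp h]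
  -- the product bound constant
  set D : ℝ := ∏ σ : (K →ₐ[ℚ] ℂ), max 1 (M / (1 - ‖σ b‖)) with hD
  have hD1 : 1 ≤ D := by
    rw [hD]
    calc (1:ℝ) = ∏ _σ : (K →ₐ[ℚ] ℂ), (1:ℝ) := by simp
      _ ≤ _ := Finset.prod_le_prod (fun _ _ => zero_le_one) (fun σ _ => le_max_left _ _)
  have hD0 : 0 < D := lt_of_lt_of_le one_pos hD1
  -- the canonical embedding
  set σ₀ : K →ₐ[ℚ] ℂ := (Complex.ofRealAm.restrictScalars ℚ).comp (IsScalarTower.toAlgHom ℚ K ℝ)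
    with hσ₀
  have hσ₀b : σ₀ b = (β : ℂ) := by simp [hσ₀, hbβ]
  -- key estimate
  have key : ∀ Q : Polynomial ℤ, (∀ i, |((Q.coeff i : ℤ) : ℝ)| ≤ M) →
      Polynomial.aeval β Q ≠ 0 → D⁻¹ ≤ |Polynomial.aeval β Q| := by
    intro Q hQ hne
    set X : ℝ := Polynomial.aeval β Q with hX
    set x : K := Polynomial.aeval b Q with hx
    have hxX : (algebraMap K ℝ) x = X :=
      (Polynomial.aeval_algHom_apply ((algebraMap K ℝ).toIntAlgHom) b Q).symm
    have hx0 : x ≠ 0 := by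
      intro h; apply hne; rw [← hxX, h, map_zero]
    -- norm is a nonzero integer
    have hxint : IsIntegral ℤ x := by
      have hmem : x ∈ Algebra.adjoin ℤ ({b} : Set K) := by
        rw [Algebra.adjoin_singleton_eq_range_aeval]
        exact ⟨Q, rfl⟩
      exact IsIntegral.of_mem_of_fg _ hbint.fg_adjoin_singleton _ hmem
    have hnormint : IsIntegral ℤ (Algebra.norm ℚ x) := Algebra.isIntegral_norm ℚ hxint
    obtain ⟨m, hm⟩ := IsIntegrallyClosed.isIntegral_iff.mp hnormint
    have hN0 : (Algebra.norm ℚ) x ≠ 0 := Algebra.norm_ne_zero_iff.mpr hx0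
    have hm0 : m ≠ 0 := by rintro rfl; simp at hm; exact hN0 hm.symm
    have hm1 : (1 : ℝ) ≤ |((m : ℤ) : ℝ)| := by
      have h : (1 : ℤ) ≤ |m| := Int.one_le_abs hm0
      exact_mod_cast h
    -- product formula
    have hprod : ‖(algebraMap ℚ ℂ) ((Algebra.norm ℚ) x)‖
        = ∏ σ : K →ₐ[ℚ] ℂ, ‖σ x‖ := by
      rw [Algebra.norm_eq_prod_embeddings, norm_prod]
    have habs : (1 : ℝ) ≤ ∏ σ : K →ₐ[ℚ] ℂ, ‖σ x‖ := by
      rw [← hprod]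
      have : (algebraMap ℚ ℂ) ((Algebra.norm ℚ) x) = ((m : ℤ) : ℂ) := by
        rw [← hm, eq_intCast (algebraMap ℤ ℚ) m, map_intCast]
      rw [this]
      calc (1 : ℝ) ≤ |((m : ℤ) : ℝ)| := hm1
        _ = ‖((m : ℤ) : ℂ)‖ := by
            rw [show ((m : ℤ) : ℂ) = (((m : ℤ) : ℝ) : ℂ) by push_cast; ring,
              Complex.norm_real, Real.norm_eq_abs]
    -- bound each factor
    have hfac : ∀ σ : K →ₐ[ℚ] ℂ, σ b ≠ (β : ℂ) →
        ‖σ x‖ ≤ max 1 (M / (1 - ‖σ b‖)) := by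
      intro σ hσ
      have hlt : ‖σ b‖ < 1 := hconj _ (hroot σ) hσ
      have : Polynomial.aeval (σ b) Q = σ x :=
        Polynomial.aeval_algHom_apply (σ.toRingHom.toIntAlgHom) b Q
      rw [← this]
      exact le_max_of_le_right (stmt5_geom_bound (σ b) hlt M hM0 Q hQ)
    have hfacβ : ∀ σ : K →ₐ[ℚ] ℂ, σ b = (β : ℂ) → ‖σ x‖ = |X| := by
      intro σ hσ
      have h1 : Polynomial.aeval (σ b) Q = σ x :=
        Polynomial.aeval_algHom_apply (σ.toRingHom.toIntAlgHom) b Q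
      have h2 : Polynomial.aeval ((β : ℝ) : ℂ) Q = ((X : ℝ) : ℂ) :=
        Polynomial.aeval_algHom_apply (Complex.ofRealAm.toRingHom.toIntAlgHom) β Q
      rw [← h1, hσ, h2, Complex.norm_real, Real.norm_eq_abs]
    -- split the product
    by_cases hXbig : 1 ≤ |X|
    · calc D⁻¹ ≤ 1 := by
            rw [inv_le_one_iff₀]; right; exact hD1
        _ ≤ |X| := hXbig
    push_neg at hXbig
    have hX0 : 0 ≤ |X| := abs_nonneg X
    set S : Finset (K →ₐ[ℚ] ℂ) := Finset.univ.filter (fun σ => σ b = (β : ℂ)) with hS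
    have hσ₀S : σ₀ ∈ S := by simp [hS, hσ₀b]
    have hcard : 1 ≤ S.card := Finset.card_pos.mpr ⟨σ₀, hσ₀S⟩
    have hsplit : (∏ σ : K →ₐ[ℚ] ℂ, ‖σ x‖)
        = (∏ σ ∈ S, ‖σ x‖) * ∏ σ ∈ Sᶜ, ‖σ x‖ :=
      (Finset.prod_mul_prod_compl S _).symm
    have hPS : (∏ σ ∈ S, ‖σ x‖) = |X| ^ S.card := by
      rw [Finset.prod_congr rfl (fun σ hσ => hfacβ σ (by simpa [hS] using hσ))]
      simp
    have hPSc : (∏ σ ∈ Sᶜ, ‖σ x‖) ≤ D := by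
      calc (∏ σ ∈ Sᶜ, ‖σ x‖)
          ≤ ∏ σ ∈ Sᶜ, max 1 (M / (1 - ‖σ b‖)) := by
            refine Finset.prod_le_prod (fun σ _ => norm_nonneg _) fun σ hσ => ?_
            exact hfac σ (by simpa [hS] using hσ)
        _ ≤ D := by
            rw [hD, ← Finset.prod_mul_prod_compl S
              (fun σ => max 1 (M / (1 - ‖σ b‖)))]
            refine le_mul_of_one_le_left ?_ ?_
            · exact Finset.prod_nonneg fun σ _ =>
                le_trans zero_le_one (le_max_left _ _)
            · calc (1:ℝ) = ∏ _σ ∈ S, (1:ℝ) := by simp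
                _ ≤ _ := Finset.prod_le_prod (fun _ _ => zero_le_one)
                    (fun σ _ => le_max_left _ _)
    have h1 : (1 : ℝ) ≤ |X| ^ S.card * D := by
      calc (1:ℝ) ≤ ∏ σ : K →ₐ[ℚ] ℂ, ‖σ x‖ := habs
        _ = (∏ σ ∈ S, ‖σ x‖) * ∏ σ ∈ Sᶜ, ‖σ x‖ := hsplit
        _ ≤ |X| ^ S.card * D := by
            rw [hPS]
            exact mul_le_mul_of_nonneg_left hPSc (pow_nonneg hX0 _)
    have h2 : |X| ^ S.card ≤ |X| := by
      calc |X| ^ S.card ≤ |X| ^ 1 :=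
            pow_le_pow_of_le_one hX0 (le_of_lt hXbig) hcard
        _ = |X| := pow_one _
    have h3 : (1 : ℝ) ≤ |X| * D :=
      le_trans h1 (mul_le_mul_of_nonneg_right h2 (le_of_lt hD0))
    rw [inv_le_iff_one_le_mul₀ hD0]
    linarith [h3]
  -- conclude
  refine ⟨D⁻¹, by positivity, ?_⟩
  rintro x ⟨P₁, hP₁, rfl⟩ y ⟨P₂, hP₂, rfl⟩ hxy
  have hQb : ∀ i, |(((P₁ - P₂).coeff i : ℤ) : ℝ)| ≤ M := by
    intro i
    rw [Polynomial.coeff_sub]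
    calc |((P₁.coeff i - P₂.coeff i : ℤ) : ℝ)|
        ≤ |((P₁.coeff i : ℤ) : ℝ)| + |((P₂.coeff i : ℤ) : ℝ)| := by
          push_cast; exact abs_sub _ _
      _ ≤ (F.sup (fun a => a.natAbs) : ℕ) + (F.sup (fun a => a.natAbs) : ℕ) :=
          add_le_add (hcoeff P₁ hP₁ i) (hcoeff P₂ hP₂ i)
      _ = M := by rw [hM]; ring
  have hne : Polynomial.aeval β (P₁ - P₂) ≠ 0 := by
    rw [map_sub]; exact sub_ne_zero_of_ne hxy
  have := key (P₁ - P₂) hQb hne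
  rwa [map_sub] at this
end

section
/- Let β > 1 be real and m a positive integer with β ≤ m + 1. Then the set Λ = {P(β) : P a polynomial with coefficients in {0, 1, ..., m}} is relatively dense in [0, ∞): there exists R > 0 such that every interval [x, x+R] with x ≥ 0 contains a point of Λ. -/
noncomputable def ΛFm (β : ℝ) (m : ℕ) : Set ℝ :=
  {x | ∃ P : Polynomial ℤ, (∀ i, 0 ≤ P.coeff i ∧ P.coeff i ≤ (m : ℤ)) ∧
    x = Polynomial.aeval β P}

lemma key_lemma_s8 (β : ℝ) (m : ℕ) (hm : 0 < m) (hβ1 : 1 < β) (hβ : β ≤ (m : ℝ) + 1) :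
    ∀ n : ℕ, ∀ x : ℝ, 0 ≤ x → x ≤ n → ∃ y ∈ ΛFm β m, x ≤ y ∧ y ≤ x + 1 := by
  intro n
  induction n with
  | zero =>
    intro x hx hxn
    have hx0 : x = 0 := le_antisymm (by exact_mod_cast hxn) hx
    refine ⟨0, ⟨0, fun i => by simp, by simp⟩, by simp [hx0], by simp [hx0]⟩
  | succ n ih =>
    intro x hx hxn
    by_cases hxm : x ≤ (m : ℝ)
    · -- constant polynomial ⌈x⌉
      refine ⟨(⌈x⌉ : ℤ), ⟨Polynomial.C ⌈x⌉, fun i => ?_, by simp⟩, Int.le_ceil x, ?_⟩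
      · rcases Nat.eq_zero_or_pos i with hi | hi
        · subst hi
          simp only [Polynomial.coeff_C_zero]
          constructor
          · exact Int.ceil_nonneg hx
          · exact Int.ceil_le.mpr (by exact_mod_cast hxm)
        · rw [Polynomial.coeff_C, if_neg hi.ne']
          simp
      · have := Int.ceil_lt_add_one x
        linarith
    · push_neg at hxm
      have hβ0 : (0:ℝ) < β := lt_trans one_pos hβ1
      set x' : ℝ := (x - m) / β with hx'def
      have hx'0 : 0 ≤ x' := div_nonneg (by linarith) hβ0.le
      have hx'n : x' ≤ n := by
        have h1 : x' ≤ x - m := div_le_self (by linarith) hβ1.le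
        have hm1 : (1:ℝ) ≤ m := by exact_mod_cast hm
        have : x ≤ (n:ℝ) + 1 := by exact_mod_cast hxn
        linarith
      obtain ⟨y', ⟨P', hP', hPy'⟩, hy1, hy2⟩ := ih x' hx'0 hx'n
      set c : ℤ := max 0 ⌈x - β * y'⌉ with hcdef
      have hβy' : β * x' ≤ β * y' := by nlinarith
      have hbx' : β * x' = x - m := by rw [hx'def]; field_simp
      have hc0 : 0 ≤ c := le_max_left _ _
      have hcm : c ≤ (m : ℤ) := by
        refine max_le (by exact_mod_cast hm.le) ?_
        refine Int.ceil_le.mpr ?_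
        push_cast
        linarith
      have hlow : x ≤ β * y' + c := by
        have h1 : (⌈x - β * y'⌉ : ℝ) ≤ (c : ℝ) := by exact_mod_cast le_max_right _ _
        have h2 := Int.le_ceil (x - β * y')
        linarith
      have hhigh : β * y' + c ≤ x + 1 := by
        rcases le_or_gt ⌈x - β * y'⌉ 0 with h | h
        · have hc : c = 0 := by simp [hcdef, h]
          rw [hc]
          have : β * y' ≤ β * (x' + 1) := by nlinarith
          push_cast
          nlinarith
        · have hc : c = ⌈x - β * y'⌉ := max_eq_right h.le
          have h2 := Int.ceil_lt_add_one (x - β * y')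
          have : (c : ℝ) < x - β * y' + 1 := by rw [hc]; exact_mod_cast h2
          linarith
      refine ⟨β * y' + c, ⟨Polynomial.X * P' + Polynomial.C c, fun i => ?_, ?_⟩, hlow, hhigh⟩
      · cases i with
        | zero => simpa using ⟨hc0, hcm⟩
        | succ j =>
          have : (Polynomial.X * P' + Polynomial.C c).coeff (j+1) = P'.coeff j := by
            simp only [Polynomial.coeff_add, Polynomial.coeff_X_mul, Polynomial.coeff_C,
              if_neg (Nat.succ_ne_zero j)]
            ring
          rw [this]
          exact hP' j
      · simp [hPy', mul_comm]

theorem stmt8 (β : ℝ) (m : ℕ) (hm : 0 < m) (hβ1 : 1 < β) (hβ : β ≤ (m : ℝ) + 1) :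
    ∃ R > 0, ∀ x : ℝ, 0 ≤ x → ∃ y ∈ ΛFm β m, y ∈ Set.Icc x (x + R) := by
  refine ⟨1, one_pos, fun x hx => ?_⟩
  have hb : x ≤ ((⌈x⌉.toNat : ℕ) : ℝ) := by
    have h1 : ((⌈x⌉.toNat : ℕ) : ℝ) = ((⌈x⌉ : ℤ) : ℝ) := by
      exact_mod_cast congrArg (fun z : ℤ => (z : ℝ)) (Int.toNat_of_nonneg (Int.ceil_nonneg hx))
    rw [h1]
    exact Int.le_ceil x
  obtain ⟨y, hy, h1, h2⟩ := key_lemma_s8 β m hm hβ1 hβ ⌈x⌉.toNat x hx hb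
  exact ⟨y, hy, h1, h2⟩
end
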